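/- Let p, q be odd integers with p, q ≥ 3, let r ≥ 4 be an even integer, and let s be an integer. Consider the group π with generators x, y, z and relators: (zx)^{(p−1)/2} z (zx)^{(1−p)/2} · ((yx)^{−(q+1)/2} y (yx)^{(q+1)/2})⁻¹; (yz⁻¹)^{−r/2} y (yz⁻¹)^{r/2} · ((yx)^{(1−q)/2} x (yx)^{(q−1)/2})⁻¹; (yz⁻¹)^{−r/2} z (yz⁻¹)^{r/2} · ((zx)^{(p+1)/2} x (zx)^{−(p+1)/2})⁻¹; and x^s·l, where l = x^{−2(p+q)}(yx)^{(q−1)/2}(yz⁻¹)^{−r/2}(yx)^{(q+1)/2}(zx)^{(p−1)/2}(yz⁻¹)^{r/2}(zx)^{(p+1)/2}. Then the quotient of π by the normal closure of the set {(yz⁻¹)^{r/2}, yx⁻¹, (zx)^p} is isomorphic to the group with presentation ⟨y, z ∣ (yz⁻¹)^{r/2}, (zy)^p, (zy)^{(p+1)/2} y (zy)^{−(p+1)/2} z⁻¹, y^{s−2p}⟩. -/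

import Mathlib

/-- Relators of the Wirtinger presentation of the fundamental group of the s-Dehn filling of
the (p,q,−r) pretzel knot complement, with generators x, y, z indexed by 0, 1, 2 in `Fin 3`. -/
def filledWirtingerRels (p q r s : ℤ) : Set (FreeGroup (Fin 3)) :=
  letI x : FreeGroup (Fin 3) := FreeGroup.of 0
  letI y : FreeGroup (Fin 3) := FreeGroup.of 1
  letI z : FreeGroup (Fin 3) := FreeGroup.of 2
  letI l : FreeGroup (Fin 3) :=
    x ^ (-2 * (p + q)) * (y * x) ^ ((q - 1) / 2) * (y * z⁻¹) ^ (-(r / 2)) *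
      (y * x) ^ ((q + 1) / 2) * (z * x) ^ ((p - 1) / 2) * (y * z⁻¹) ^ (r / 2) *
      (z * x) ^ ((p + 1) / 2)
  {(z * x) ^ ((p - 1) / 2) * z * (z * x) ^ ((1 - p) / 2) *
      ((y * x) ^ (-((q + 1) / 2)) * y * (y * x) ^ ((q + 1) / 2))⁻¹,
    (y * z⁻¹) ^ (-(r / 2)) * y * (y * z⁻¹) ^ (r / 2) *
      ((y * x) ^ ((1 - q) / 2) * x * (y * x) ^ ((q - 1) / 2))⁻¹,
    (y * z⁻¹) ^ (-(r / 2)) * z * (y * z⁻¹) ^ (r / 2) *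
      ((z * x) ^ ((p + 1) / 2) * x * (z * x) ^ (-((p + 1) / 2)))⁻¹,
    x ^ s * l}

/-- Relators of the factor group
⟨y, z ∣ (yz⁻¹)^(r/2), (zy)^p, (zy)^((p+1)/2) y (zy)^(−(p+1)/2) z⁻¹, y^(s−2p)⟩,
with y, z the generators indexed by 0, 1 in `Fin 2`. -/
def factorRels (p r s : ℤ) : Set (FreeGroup (Fin 2)) :=
  letI y : FreeGroup (Fin 2) := FreeGroup.of 0
  letI z : FreeGroup (Fin 2) := FreeGroup.of 1
  {(y * z⁻¹) ^ (r / 2), (z * y) ^ p,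
    (z * y) ^ ((p + 1) / 2) * y * (z * y) ^ (-((p + 1) / 2)) * z⁻¹, y ^ (s - 2 * p)}

/-!
Killing `y x⁻¹` identifies `x` with `y`, so the quotient is generated by `y` and `z`. Once also
`(y z⁻¹) ^ (r / 2) = 1` and `(z y) ^ p = 1`, the second Wirtinger relator becomes trivial, the
third becomes `z = (z y) ^ ((p + 1) / 2) y (z y) ^ (-((p + 1) / 2))`, and the first follows from it
by conjugating with `(z y) ^ ((p - 1) / 2)`. As `q` is odd, the powers of `y` in the filling
relator add up to `y ^ (s - 2 p) (z y) ^ p`. Thus both groups are presented by the same relations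
on `y` and `z`.
-/

lemma PresentedGroup.lift_eq_one_of_mem {α H : Type*} [Group H] {rels : Set (FreeGroup α)}
    (f : PresentedGroup rels →* H) {g : α → H} (hg : ∀ i, f (PresentedGroup.of i) = g i)
    {w : FreeGroup α} (hw : w ∈ rels) : FreeGroup.lift g w = 1 := by
  rw [← FreeGroup.lift_unique (f.comp (PresentedGroup.mk rels)) hg, MonoidHom.comp_apply,
    PresentedGroup.one_of_mem hw, map_one]

section Relations

variable {G : Type*} [Group G] {k n r s : ℤ} {Y Z : G}

lemma factorRels_lift_eq_one_iff :
    (∀ w ∈ factorRels (2 * k + 1) r s, FreeGroup.lift ![Y, Z] w = 1) ↔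
      (Y * Z⁻¹) ^ (r / 2) = 1 ∧ (Z * Y) ^ (2 * k + 1) = 1 ∧
        (Z * Y) ^ (k + 1) * Y * (Z * Y) ^ (-(k + 1)) = Z ∧ Y ^ (s - 2 * (2 * k + 1)) = 1 := by
  have hk : (2 * k + 1 + 1) / 2 = k + 1 := by omega
  simp [factorRels, hk, mul_inv_eq_one]

lemma filledWirtingerRels_lift_eq_one_iff (hc : (Y * Z⁻¹) ^ (r / 2) = 1)
    (ha : (Z * Y) ^ (2 * k + 1) = 1) :
    (∀ w ∈ filledWirtingerRels (2 * k + 1) (2 * n + 1) r s, FreeGroup.lift ![Y, Y, Z] w = 1) ↔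
      (Z * Y) ^ (k + 1) * Y * (Z * Y) ^ (-(k + 1)) = Z ∧ Y ^ (s - 2 * (2 * k + 1)) = 1 := by
  have hk₁ : (2 * k + 1 - 1) / 2 = k := by omega
  have hk₂ : (1 - (2 * k + 1)) / 2 = -k := by omega
  have hk₃ : (2 * k + 1 + 1) / 2 = k + 1 := by omega
  have hn₁ : (2 * n + 1 - 1) / 2 = n := by omega
  have hn₂ : (1 - (2 * n + 1)) / 2 = -n := by omega
  have hn₃ : (2 * n + 1 + 1) / 2 = n + 1 := by omega
  have hYY (e : ℤ) : (Y * Y) ^ e = Y ^ (2 * e) := by rw [← zpow_two, ← zpow_mul]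
  have hc' : (Y * Z⁻¹) ^ (-(r / 2)) = 1 := by rw [zpow_neg, hc, inv_one]
  simp only [filledWirtingerRels, Set.mem_insert_iff, Set.mem_singleton_iff, forall_eq_or_imp,
    forall_eq, map_mul, map_zpow, map_inv, FreeGroup.lift_apply_of, Matrix.cons_val_zero,
    Matrix.cons_val_one, Matrix.cons_val_two, Matrix.head_cons, Matrix.tail_cons, hk₁, hk₂, hk₃,
    hn₁, hn₂, hn₃, hYY, hc, hc', one_mul, mul_one]
  have hFilling : Y ^ s * (Y ^ (-2 * (2 * k + 1 + (2 * n + 1))) * Y ^ (2 * n) * Y ^ (2 * (n + 1)) *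
      (Z * Y) ^ k * (Z * Y) ^ (k + 1)) = Y ^ (s - 2 * (2 * k + 1)) * (Z * Y) ^ (2 * k + 1) := by
    group
  rw [hFilling, ha, mul_one, mul_inv_eq_one (a := Z), eq_comm (a := Z)]
  constructor
  · rintro ⟨-, -, hZ, hY⟩
    exact ⟨hZ, hY⟩
  · rintro ⟨hZ, hY⟩
    refine ⟨?_, by group, hZ, hY⟩
    calc (Z * Y) ^ k * Z * (Z * Y) ^ (-k) * (Y ^ (2 * -(n + 1)) * Y * Y ^ (2 * (n + 1)))⁻¹
        = (Z * Y) ^ k * ((Z * Y) ^ (k + 1) * Y * (Z * Y) ^ (-(k + 1))) * (Z * Y) ^ (-k) *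
            (Y ^ (2 * -(n + 1)) * Y * Y ^ (2 * (n + 1)))⁻¹ := by rw [hZ]
      _ = (Z * Y) ^ (2 * k + 1) * Y * ((Z * Y) ^ (2 * k + 1))⁻¹ * Y⁻¹ := by group
      _ = 1 := by rw [ha]; group

end Relations

section FactorGroup

variable {k n r s : ℤ}

lemma factorRels_of_relations :
    letI y : PresentedGroup (factorRels (2 * k + 1) r s) := PresentedGroup.of 0
    letI z : PresentedGroup (factorRels (2 * k + 1) r s) := PresentedGroup.of 1
    (y * z⁻¹) ^ (r / 2) = 1 ∧ (z * y) ^ (2 * k + 1) = 1 ∧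
      (z * y) ^ (k + 1) * y * (z * y) ^ (-(k + 1)) = z ∧ y ^ (s - 2 * (2 * k + 1)) = 1 :=
  factorRels_lift_eq_one_iff.mp fun _ hw =>
    PresentedGroup.lift_eq_one_of_mem (MonoidHom.id _) (fun i => by fin_cases i <;> rfl) hw

lemma filledWirtingerRels_lift_factor_gens :
    ∀ w ∈ filledWirtingerRels (2 * k + 1) (2 * n + 1) r s,
      FreeGroup.lift ![PresentedGroup.of 0, PresentedGroup.of 0, PresentedGroup.of 1] w =
        (1 : PresentedGroup (factorRels (2 * k + 1) r s)) :=
  let ⟨hc, ha, hZ, hY⟩ := factorRels_of_relations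
  (filledWirtingerRels_lift_eq_one_iff hc ha).mpr ⟨hZ, hY⟩

end FactorGroup

abbrev filledWirtingerFactorSubgroup (p q r s : ℤ) :
    Subgroup (PresentedGroup (filledWirtingerRels p q r s)) :=
  Subgroup.normalClosure
    {(PresentedGroup.of 1 * (PresentedGroup.of 2)⁻¹) ^ (r / 2),
      PresentedGroup.of 1 * (PresentedGroup.of 0)⁻¹,
      (PresentedGroup.of 2 * PresentedGroup.of 0) ^ p}

abbrev FilledWirtingerFactor (p q r s : ℤ) :=
  PresentedGroup (filledWirtingerRels p q r s) ⧸ filledWirtingerFactorSubgroup p q r s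

namespace FilledWirtingerFactor

section

variable {p q r s : ℤ}

def gen (i : Fin 3) : FilledWirtingerFactor p q r s :=
  QuotientGroup.mk (PresentedGroup.of i)

lemma gen_relations :
    (gen 1 * (gen 2)⁻¹ : FilledWirtingerFactor p q r s) ^ (r / 2) = 1 ∧
      (gen 1 : FilledWirtingerFactor p q r s) = gen 0 ∧
      (gen 2 * gen 0 : FilledWirtingerFactor p q r s) ^ p = 1 := by
  have h (g) (hg : g ∈ filledWirtingerFactorSubgroup p q r s) :
      (g : FilledWirtingerFactor p q r s) = 1 :=
    (QuotientGroup.eq_one_iff g).mpr hg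
  refine ⟨?_, ?_, ?_⟩
  · simpa [gen] using h _ (Subgroup.subset_normalClosure (Set.mem_insert _ _))
  · simpa [gen, mul_inv_eq_one] using
      h _ (Subgroup.subset_normalClosure (Set.mem_insert_of_mem _ (Set.mem_insert _ _)))
  · simpa [gen] using
      h _ (Subgroup.subset_normalClosure (Set.mem_insert_of_mem _ (Set.mem_insert_of_mem _ rfl)))

end

variable {k n r s : ℤ}

lemma factorRels_lift_gen :
    ∀ w ∈ factorRels (2 * k + 1) r s,
      FreeGroup.lift ![gen 1, gen 2] w =
        (1 : FilledWirtingerFactor (2 * k + 1) (2 * n + 1) r s) := by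
  obtain ⟨hc, hYX, ha⟩ := gen_relations (p := 2 * k + 1) (q := 2 * n + 1) (r := r) (s := s)
  rw [← hYX] at ha
  refine factorRels_lift_eq_one_iff.mpr
    ⟨hc, ha, (filledWirtingerRels_lift_eq_one_iff (n := n) hc ha).mp ?_⟩
  refine fun w hw => PresentedGroup.lift_eq_one_of_mem (QuotientGroup.mk' _) ?_ hw
  intro i
  fin_cases i
  exacts [hYX.symm, rfl, rfl]

def toFactorGroup :
    FilledWirtingerFactor (2 * k + 1) (2 * n + 1) r s →*
      PresentedGroup (factorRels (2 * k + 1) r s) :=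
  QuotientGroup.lift _ (PresentedGroup.toGroup filledWirtingerRels_lift_factor_gens) <|
    Subgroup.normalClosure_le_normal <| by
      obtain ⟨hc, ha, -⟩ := factorRels_of_relations (k := k) (r := r) (s := s)
      rintro g (rfl | rfl | rfl) <;> simp [PresentedGroup.toGroup.of, hc, ha]

def ofFactorGroup :
    PresentedGroup (factorRels (2 * k + 1) r s) →*
      FilledWirtingerFactor (2 * k + 1) (2 * n + 1) r s :=
  PresentedGroup.toGroup factorRels_lift_gen

variable (k n r s) in
def equivFactorGroup :
    FilledWirtingerFactor (2 * k + 1) (2 * n + 1) r s ≃*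
      PresentedGroup (factorRels (2 * k + 1) r s) :=
  MonoidHom.toMulEquiv toFactorGroup ofFactorGroup
    (QuotientGroup.monoidHom_ext _ <| PresentedGroup.ext fun i => by
      fin_cases i
      · exact gen_relations.2.1
      · rfl
      · rfl)
    (PresentedGroup.ext fun i => by fin_cases i <;> rfl)

end FilledWirtingerFactor

theorem factor_group_of_filled_wirtinger_general (p q r s : ℤ)
    (hpodd : Odd p) (hqodd : Odd q) :
    letI x : PresentedGroup (filledWirtingerRels p q r s) := PresentedGroup.of 0
    letI y : PresentedGroup (filledWirtingerRels p q r s) := PresentedGroup.of 1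
    letI z : PresentedGroup (filledWirtingerRels p q r s) := PresentedGroup.of 2
    Nonempty
      ((PresentedGroup (filledWirtingerRels p q r s) ⧸
          Subgroup.normalClosure {(y * z⁻¹) ^ (r / 2), y * x⁻¹, (z * x) ^ p}) ≃*
        PresentedGroup (factorRels p r s)) := by
  obtain ⟨k, rfl⟩ := hpodd
  obtain ⟨n, rfl⟩ := hqodd
  exact ⟨FilledWirtingerFactor.equivFactorGroup k n r s⟩

theorem factor_group_of_filled_wirtinger (p q r s : ℤ)
    (hpodd : Odd p) (hqodd : Odd q) (hp : 3 ≤ p) (hq : 3 ≤ q)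
    (hreven : Even r) (hr : 4 ≤ r) :
    letI x : PresentedGroup (filledWirtingerRels p q r s) := PresentedGroup.of 0
    letI y : PresentedGroup (filledWirtingerRels p q r s) := PresentedGroup.of 1
    letI z : PresentedGroup (filledWirtingerRels p q r s) := PresentedGroup.of 2
    Nonempty
      ((PresentedGroup (filledWirtingerRels p q r s) ⧸
          Subgroup.normalClosure {(y * z⁻¹) ^ (r / 2), y * x⁻¹, (z * x) ^ p}) ≃*
        PresentedGroup (factorRels p r s)) :=
  factor_group_of_filled_wirtinger_general p q r s hpodd hqodd
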